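/- arXiv:1502.01450 — 2 statements merged into one kernel-verified Lean document; each statement's English description precedes it below -/
import Mathlib

section
/- Let X be a quandle and D_n the subgroup of C_n^R(X) generated by n-tuples (x_1,...,x_n) with x_i = x_{i+1} for some i (for n ≥ 2; D_n = 0 otherwise). Then the boundary map ∂_n of the rack chain complex satisfies ∂_n(D_n) ⊆ D_{n-1}, so the degenerate chains form a subcomplex. -/
/-- The rack/quandle boundary map `∂ : C_{n+1}^R(X) → C_n^R(X)`. -/
noncomputable def bnd {X : Type*} (op : X → X → X) (n : ℕ) :
    ((Fin (n + 1) → X) →₀ ℤ) →ₗ[ℤ] ((Fin n → X) →₀ ℤ) :=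
  Finsupp.lsum ℤ fun x => LinearMap.toSpanSingleton ℤ _
    (∑ i : Fin (n + 1), if 1 ≤ (i : ℕ) then
      ((-1 : ℤ) ^ ((i : ℕ) + 1)) •
        (Finsupp.single (fun j => x (i.succAbove j)) (1 : ℤ) -
          Finsupp.single
            (fun j : Fin n =>
              if (j : ℕ) < (i : ℕ) then op (x (i.succAbove j)) (x i)
              else x (i.succAbove j)) (1 : ℤ))
      else 0)

/-- The subgroup `D_n` of degenerate chains, generated by tuples with two equal
consecutive entries (trivially `0` for `n ≤ 1`, since no such tuples exist). -/
noncomputable def degSub (X : Type*) (n : ℕ) : AddSubgroup ((Fin n → X) →₀ ℤ) :=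
  AddSubgroup.closure
    {c | ∃ x : Fin n → X,
      (∃ i j : Fin n, (i : ℕ) + 1 = (j : ℕ) ∧ x i = x j) ∧ c = Finsupp.single x 1}

lemma val_succAbove {n : ℕ} (i : Fin (n + 1)) (m : Fin n) :
    ((i.succAbove m : Fin (n + 1)) : ℕ) = if (m : ℕ) < (i : ℕ) then (m : ℕ) else (m : ℕ) + 1 := by
  simp only [Fin.succAbove, Fin.lt_def, Fin.coe_castSucc]
  split_ifs <;> simp

lemma mem_of_deg {X : Type*} {n : ℕ} (y : Fin n → X) (i j : Fin n)
    (hij : (i : ℕ) + 1 = (j : ℕ)) (h : y i = y j) :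
    Finsupp.single y (1 : ℤ) ∈ degSub X n :=
  AddSubgroup.subset_closure ⟨y, ⟨i, j, hij, h⟩, rfl⟩

/-- For a quandle `X`, the boundary map sends degenerate chains to degenerate chains:
`∂_n(D_n) ⊆ D_{n-1}`, so the degenerate chains form a subcomplex. -/
theorem stmt7 {X : Type*} (op : X → X → X)
    (h1 : ∀ x, op x x = x)
    (h2 : ∀ x y, ∃! u, op u y = x)
    (h3 : ∀ x y z, op (op x y) z = op (op x z) (op y z)) :
    ∀ n : ℕ, ∀ c ∈ degSub X (n + 1), bnd op n c ∈ degSub X n := by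
  intro n c hc
  induction hc using AddSubgroup.closure_induction with
  | zero => simp only [map_zero]; exact zero_mem _
  | add a b _ _ ha hb => rw [map_add]; exact add_mem ha hb
  | neg a _ ha => rw [map_neg]; exact neg_mem ha
  | mem c hcmem =>
    obtain ⟨x, ⟨k, j, hkj, hx⟩, rfl⟩ := hcmem
    set T : Fin (n + 1) → ((Fin n → X) →₀ ℤ) := fun i =>
      if 1 ≤ (i : ℕ) then
        ((-1 : ℤ) ^ ((i : ℕ) + 1)) •
          (Finsupp.single (fun m => x (i.succAbove m)) (1 : ℤ) -
            Finsupp.single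
              (fun m : Fin n =>
                if (m : ℕ) < (i : ℕ) then op (x (i.succAbove m)) (x i)
                else x (i.succAbove m)) (1 : ℤ))
      else 0 with hT
    have hbnd : bnd op n (Finsupp.single x 1) = ∑ i : Fin (n + 1), T i := by
      simp only [hT, bnd, Finsupp.lsum_single, LinearMap.toSpanSingleton_apply, one_smul]
    rw [hbnd]
    have hjk : j ≠ k := by
      intro h; rw [h] at hkj; omega
    have hsplit : ∑ i : Fin (n + 1), T i
        = (T k + T j) + ∑ i ∈ (Finset.univ.erase k).erase j, T i := by
      rw [← Finset.add_sum_erase _ _ (Finset.mem_univ k),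
        ← Finset.add_sum_erase _ _ (Finset.mem_erase.mpr ⟨hjk, Finset.mem_univ j⟩), add_assoc]
    rw [hsplit]
    refine add_mem ?_ ?_
    · -- the two middle terms cancel
      have hAeq : (fun m => x (k.succAbove m)) = (fun m => x (j.succAbove m)) := by
        funext m
        have hk := val_succAbove k m
        have hj := val_succAbove j m
        rcases lt_trichotomy (m : ℕ) (k : ℕ) with h | h | h
        · have : k.succAbove m = j.succAbove m := Fin.ext (by rw [hk, hj]; split_ifs <;> omega)
          rw [this]
        · have e1 : k.succAbove m = j := Fin.ext (by rw [hk]; split_ifs <;> omega)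
          have e2 : j.succAbove m = k := Fin.ext (by rw [hj]; split_ifs <;> omega)
          rw [e1, e2, hx]
        · have : k.succAbove m = j.succAbove m := Fin.ext (by rw [hk, hj]; split_ifs <;> omega)
          rw [this]
      have hBeq : (fun m : Fin n =>
            if (m : ℕ) < (k : ℕ) then op (x (k.succAbove m)) (x k) else x (k.succAbove m))
          = (fun m : Fin n =>
            if (m : ℕ) < (j : ℕ) then op (x (j.succAbove m)) (x j) else x (j.succAbove m)) := by
        funext m
        have hk := val_succAbove k m
        have hj := val_succAbove j m
        rcases lt_trichotomy (m : ℕ) (k : ℕ) with h | h | h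
        · have e : k.succAbove m = j.succAbove m := Fin.ext (by rw [hk, hj]; split_ifs <;> omega)
          rw [if_pos h, if_pos (by omega), e, hx]
        · have e1 : k.succAbove m = j := Fin.ext (by rw [hk]; split_ifs <;> omega)
          have e2 : j.succAbove m = k := Fin.ext (by rw [hj]; split_ifs <;> omega)
          rw [if_neg (by omega), if_pos (by omega), e1, e2, ← hx, h1]
        · have e : k.succAbove m = j.succAbove m := Fin.ext (by rw [hk, hj]; split_ifs <;> omega)
          rw [if_neg (by omega), if_neg (by omega), e]
      by_cases hk0 : 1 ≤ (k : ℕ)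
      · have hTk : T k = ((-1 : ℤ) ^ ((k : ℕ) + 1)) •
            (Finsupp.single (fun m => x (k.succAbove m)) (1 : ℤ) -
              Finsupp.single (fun m : Fin n =>
                if (m : ℕ) < (k : ℕ) then op (x (k.succAbove m)) (x k)
                else x (k.succAbove m)) (1 : ℤ)) := by
          simp only [hT]; exact if_pos hk0
        have hTj : T j = ((-1 : ℤ) ^ ((k : ℕ) + 1 + 1)) •
            (Finsupp.single (fun m => x (k.succAbove m)) (1 : ℤ) -
              Finsupp.single (fun m : Fin n =>
                if (m : ℕ) < (k : ℕ) then op (x (k.succAbove m)) (x k)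
                else x (k.succAbove m)) (1 : ℤ)) := by
          simp only [hT]
          rw [if_pos (by omega), ← hAeq, ← hBeq, ← hkj]
        rw [hTk, hTj, ← add_smul]
        have : ((-1 : ℤ) ^ ((k : ℕ) + 1) + (-1 : ℤ) ^ ((k : ℕ) + 1 + 1)) = 0 := by
          rw [pow_succ]; ring
        rw [this, zero_smul]
        exact zero_mem _
      · -- k = 0 : T k = 0 and T j itself vanishes since the two faces agree
        have hk0' : (k : ℕ) = 0 := by omega
        have hTk : T k = 0 := by simp only [hT]; exact if_neg (by omega)
        have hBA : (fun m : Fin n =>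
              if (m : ℕ) < (j : ℕ) then op (x (j.succAbove m)) (x j) else x (j.succAbove m))
            = (fun m => x (j.succAbove m)) := by
          funext m
          by_cases hm : (m : ℕ) < (j : ℕ)
          · have hmv : (m : ℕ) = 0 := by omega
            have e : j.succAbove m = k := Fin.ext (by rw [val_succAbove]; split_ifs <;> omega)
            rw [if_pos hm, e, hx, h1]
          · rw [if_neg hm]
        have hTj : T j = 0 := by
          simp only [hT]
          rw [if_pos (by omega), hBA, sub_self, smul_zero]
        rw [hTk, hTj, add_zero]
        exact zero_mem _
    · -- remaining terms are degenerate
      refine sum_mem fun i hi => ?_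
      obtain ⟨hij, hik, -⟩ : i ≠ j ∧ i ≠ k ∧ True := by
        rw [Finset.mem_erase, Finset.mem_erase] at hi; exact ⟨hi.1, hi.2.1, trivial⟩
      have hikv : (i : ℕ) ≠ (k : ℕ) := fun h => hik (Fin.ext h)
      have hijv : (i : ℕ) ≠ (j : ℕ) := fun h => hij (Fin.ext h)
      by_cases h1i : 1 ≤ (i : ℕ)
      · simp only [hT]; rw [if_pos h1i]
        obtain ⟨m, hm⟩ := Fin.exists_succAbove_eq (Ne.symm hik)
        obtain ⟨m', hm'⟩ := Fin.exists_succAbove_eq (Ne.symm hij)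
        have em : (if (m : ℕ) < (i : ℕ) then (m : ℕ) else (m : ℕ) + 1) = (k : ℕ) := by
          rw [← val_succAbove, hm]
        have em' : (if (m' : ℕ) < (i : ℕ) then (m' : ℕ) else (m' : ℕ) + 1) = (j : ℕ) := by
          rw [← val_succAbove, hm']
        have hmm' : (m : ℕ) + 1 = (m' : ℕ) := by
          split_ifs at em em' <;> omega
        have hside : ((m : ℕ) < (i : ℕ)) ↔ ((m' : ℕ) < (i : ℕ)) := by
          split_ifs at em em' <;> omega
        refine zsmul_mem (sub_mem ?_ ?_) _
        · exact mem_of_deg _ m m' hmm' (by simp only [hm, hm', hx])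
        · refine mem_of_deg _ m m' hmm' ?_
          simp only [hm, hm']
          by_cases hs : (m : ℕ) < (i : ℕ)
          · rw [if_pos hs, if_pos (hside.mp hs), hx]
          · rw [if_neg hs, if_neg (fun h => hs (hside.mpr h)), hx]
      · simp only [hT]; rw [if_neg h1i]; exact zero_mem _
end

section
/- In the group ring Z[Z], the sum Σ over the 8 pairs (x,y) ∈ E of θ(e, x, y, ρ(x)) · θ(e, ρ(y), x, y)⁻¹ equals 4 + 2t² + 2t⁻², where E = {(e_1,e_2),(e_1,e_2'),(e_1',e_2),(e_1',e_2'),(e_2,e_1),(e_2,e_1'),(e_2',e_1),(e_2',e_1')}, ρ is the antipodal map ρ(e_i) = e_i', ρ(e_i') = e_i, and θ is the cocycle defined by θ = χ_{e,e_1,e_2,e_1} χ_{e,e_1',e_2',e_1} χ_{e,e_1',e_2,e_1'} χ_{e,e_1,e_2',e_1'} · χ_{e,e_1',e_2,e_1}⁻¹ χ_{e,e_1,e_2',e_1}⁻¹ χ_{e,e_1,e_2,e_1'}⁻¹ χ_{e,e_1',e_2',e_1'}⁻¹ · χ_{e,e_2,e_1,e_2}⁻¹ χ_{e,e_2',e_1',e_2}⁻¹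 χ_{e,e_2',e_1,e_2'}⁻¹ χ_{e,e_2,e_1',e_2'}⁻¹ · χ_{e,e_2',e_1,e_2} χ_{e,e_2,e_1',e_2} χ_{e,e_2,e_1,e_2'} χ_{e,e_2',e_1',e_2'}, with χ_{x,y,z,w}(a,b,c,d) = t if (a,b,c,d) = (x,y,z,w) and 1 otherwise. -/
/- The dihedral quandle of order 4, with elements `e_1, e_2, e_1', e_2'` identified
with `0, 1, 2, 3 : ZMod 4`; the antipodal good involution is `ρ(x) = x + 2`. -/

/-- The characteristic function `χ_{e,x,y,z}` with `Y = {e}` a singleton: value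
`t = ofAdd 1 ∈ ℤ = ⟨t⟩` at `(x,y,z)` and `1` elsewhere. -/
def chiZ (x y z a b c : ZMod 4) : Multiplicative ℤ :=
  if (a, b, c) = (x, y, z) then Multiplicative.ofAdd 1 else 1

/-- The symmetric quandle 3-cocycle `θ` of (Kamada–Oshiro, Example 9.3), written with
`e_1, e_2, e_1', e_2' = 0, 1, 2, 3`. -/
def theta15 (a b c : ZMod 4) : Multiplicative ℤ :=
  chiZ 0 1 0 a b c * chiZ 2 3 0 a b c * chiZ 2 1 2 a b c * chiZ 0 3 2 a b c *
    (chiZ 2 1 0 a b c)⁻¹ * (chiZ 0 3 0 a b c)⁻¹ * (chiZ 0 1 2 a b c)⁻¹ *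
    (chiZ 2 3 2 a b c)⁻¹ *
    (chiZ 1 0 1 a b c)⁻¹ * (chiZ 3 2 1 a b c)⁻¹ * (chiZ 3 0 3 a b c)⁻¹ *
    (chiZ 1 2 3 a b c)⁻¹ *
    chiZ 3 0 1 a b c * chiZ 1 2 1 a b c * chiZ 1 0 3 a b c * chiZ 3 2 3 a b c

/-- The set `E` of the eight pairs, with `e_1, e_2, e_1', e_2' = 0, 1, 2, 3`. -/
def pairsE : List (ZMod 4 × ZMod 4) :=
  [(0, 1), (0, 3), (2, 1), (2, 3), (1, 0), (1, 2), (3, 0), (3, 2)]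

/-- `Σ_{(x,y) ∈ E} θ(e,x,y,ρ(x)) θ(e,ρ(y),x,y)⁻¹ = 4 + 2t² + 2t⁻²` in `ℤ[ℤ] = ℤ[t,t⁻¹]`,
where `ρ(x) = x + 2` is the antipodal map. -/
theorem stmt15 :
    ((pairsE.map fun p =>
      (MonoidAlgebra.single (theta15 p.1 p.2 (p.1 + 2) * (theta15 (p.2 + 2) p.1 p.2)⁻¹)
        (1 : ℤ) : MonoidAlgebra ℤ (Multiplicative ℤ)))).sum =
    MonoidAlgebra.single 1 4 +
      MonoidAlgebra.single (Multiplicative.ofAdd (2 : ℤ)) 2 +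
      MonoidAlgebra.single (Multiplicative.ofAdd (-2 : ℤ)) 2 := by
  have h1 : theta15 0 1 (0+2) * (theta15 (1+2) 0 1)⁻¹ = Multiplicative.ofAdd (-2:ℤ) := by decide
  have h2 : theta15 0 3 (0+2) * (theta15 (3+2) 0 3)⁻¹ = 1 := by decide
  have h3 : theta15 2 1 (2+2) * (theta15 (1+2) 2 1)⁻¹ = 1 := by decide
  have h4 : theta15 2 3 (2+2) * (theta15 (3+2) 2 3)⁻¹ = Multiplicative.ofAdd (2:ℤ) := by decide
  have h5 : theta15 1 0 (1+2) * (theta15 (0+2) 1 0)⁻¹ = Multiplicative.ofAdd (2:ℤ) := by decide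
  have h6 : theta15 1 2 (1+2) * (theta15 (2+2) 1 2)⁻¹ = 1 := by decide
  have h7 : theta15 3 0 (3+2) * (theta15 (0+2) 3 0)⁻¹ = 1 := by decide
  have h8 : theta15 3 2 (3+2) * (theta15 (2+2) 3 2)⁻¹ = Multiplicative.ofAdd (-2:ℤ) := by decide
  simp only [pairsE, List.map_cons, List.map_nil, List.sum_cons, List.sum_nil, add_zero,
    h1, h2, h3, h4, h5, h6, h7, h8]
  rw [show (4:ℤ) = 1+1+1+1 by norm_num, show (2:ℤ) = 1+1 by norm_num]
  simp only [MonoidAlgebra.single_add]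
  abel
end
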